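/- Let m ≥ 0, h ∈ ℝ, a < b ≤ B be reals, and let c ∈ ℝ be the Gaussian centroid of [a,b], i.e. ∫_a^b (x − c) dμ₁(x) = 0. Assume moreover that ∫_{−∞}^B (x − c) Φ(m x + h) dμ₁(x) = 0. Then, writing y = mx + h, ( ∫_{−∞}^B e^{−y²/2} dμ₁(x) ) / ( ∫_{−∞}^B Φ(y) dμ₁(x) ) ≥ ( ∫_a^b e^{−y²/2} dμ₁(x) ) / ( ∫_a^b Φ(y) dμ₁(x) ). -/

import Mathlib

open Real MeasureTheory Set Filter Topology
open scoped ENNReal NNReal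

/-- The standard Gaussian measure on `ℝ`, with density `(2π)^{-1/2} exp(−x²/2)`
with respect to Lebesgue measure. -/
noncomputable def stdGaussian1 : Measure ℝ :=
  volume.withDensity fun x =>
    ENNReal.ofReal ((Real.sqrt (2 * Real.pi))⁻¹ * Real.exp (-x ^ 2 / 2))

/-- The standard normal cumulative distribution function
`Φ(x) = (2π)^{-1/2} ∫_{−∞}^x exp(−t²/2) dt`. -/
noncomputable def stdNormalCDF (x : ℝ) : ℝ :=
  (Real.sqrt (2 * Real.pi))⁻¹ * ∫ t in Set.Iic x, Real.exp (-t ^ 2 / 2)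

noncomputable def gE (t : ℝ) : ℝ := Real.exp (-t ^ 2 / 2)
noncomputable def gG (t : ℝ) : ℝ := ∫ s in Iic t, gE s

lemma gE_pos (t : ℝ) : 0 < gE t := Real.exp_pos _
lemma gE_le_one (t : ℝ) : gE t ≤ 1 := by
  rw [gE, Real.exp_le_one_iff]; nlinarith [sq_nonneg t]

lemma gE_eq (t : ℝ) : gE t = Real.exp (-(1/2) * t ^ 2) := by rw [gE]; ring_nf

lemma integrable_gE : Integrable gE := by
  have := integrable_exp_neg_mul_sq (show (0:ℝ) < 1/2 by norm_num)
  exact this.congr (by filter_upwards with x; rw [gE_eq])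

lemma gE_le_quarter (t : ℝ) : gE t ≤ Real.exp (-(1/4) * t ^ 2) := by
  rw [gE_eq]; apply Real.exp_le_exp.2; nlinarith [sq_nonneg t]

lemma abs_mul_gE_le (t : ℝ) : |t| * gE t ≤ 2 * Real.exp (-(1/4) * t ^ 2) := by
  have h1 : |t| ≤ 2 * Real.exp ((1/4) * t ^ 2) := by
    have := Real.add_one_le_exp ((1/4) * t ^ 2)
    nlinarith [sq_nonneg (|t| - 2), sq_abs t]
  calc |t| * gE t ≤ (2 * Real.exp ((1/4) * t ^ 2)) * Real.exp (-(1/2) * t^2) := by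
        rw [gE_eq]; exact mul_le_mul_of_nonneg_right h1 (Real.exp_pos _).le
    _ = 2 * Real.exp (-(1/4) * t ^ 2) := by rw [mul_assoc, ← Real.exp_add]; ring_nf

lemma continuous_gE : Continuous gE := by
  unfold gE; continuity

lemma integrable_mul_gE : Integrable (fun t => t * gE t) := by
  have base := (integrable_exp_neg_mul_sq (show (0:ℝ) < 1/4 by norm_num)).const_mul 2
  refine base.mono' ?_ ?_
  · exact (continuous_id.mul continuous_gE).aestronglyMeasurable
  · filter_upwards with t
    rw [norm_mul, Real.norm_eq_abs, Real.norm_eq_abs, abs_of_pos (gE_pos t)]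
    simpa [abs_of_pos (Real.exp_pos _)] using abs_mul_gE_le t

lemma hasDerivAt_gG (t : ℝ) : HasDerivAt gG (gE t) t := by
  have key : ∀ x : ℝ, gG x - gG 0 = ∫ s in (0:ℝ)..x, gE s := fun x =>
    intervalIntegral.integral_Iic_sub_Iic integrable_gE.integrableOn
      integrable_gE.integrableOn
  have h2 : HasDerivAt (fun x => gG 0 + ∫ s in (0:ℝ)..x, gE s) (gE t) t := by
    apply HasDerivAt.const_add
    exact intervalIntegral.integral_hasDerivAt_right
      (integrable_gE.intervalIntegrable)
      (continuous_gE.stronglyMeasurableAtFilter _ _)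
      continuous_gE.continuousAt
  refine h2.congr_of_eventuallyEq ?_
  filter_upwards with x
  rw [← key x]; ring

lemma continuous_gG : Continuous gG := by
  have : ∀ t, HasDerivAt gG (gE t) t := hasDerivAt_gG
  exact continuous_iff_continuousAt.2 fun t => (this t).continuousAt

lemma gG_pos (t : ℝ) : 0 < gG t := by
  rw [gG, setIntegral_pos_iff_support_of_nonneg_ae
    (by filter_upwards with x using (gE_pos x).le) integrable_gE.integrableOn]
  have hsupp : Function.support gE = univ := by
    ext x; simp [Function.mem_support, (gE_pos x).ne']
  rw [hsupp, univ_inter, Real.volume_Iic]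
  norm_num

lemma integral_mul_gE_Iic (t : ℝ) : ∫ s in Iic t, s * gE s = -gE t := by
  have h : ∫ s in Iic t, s * gE s = (fun s => -gE s) t - 0 := by
    apply MeasureTheory.integral_Iic_of_hasDerivAt_of_tendsto'
    · intro x _
      have h1 : HasDerivAt (fun s : ℝ => -s ^ 2 / 2) (-x) x := by
        have := ((hasDerivAt_pow 2 x).neg.div_const 2)
        refine this.congr_deriv ?_; push_cast; ring
      have h2 := ((Real.hasDerivAt_exp (-x^2/2)).comp x h1).neg
      refine h2.congr_deriv ?_
      simp only [gE]; ring
    · exact integrable_mul_gE.integrableOn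
    · rw [show (0:ℝ) = -0 by ring]
      apply Tendsto.neg
      have h0 : Tendsto (fun s : ℝ => -s ^ 2 / 2) atBot atBot := by
        apply tendsto_atBot_mono' atBot ?_ tendsto_id
        filter_upwards [eventually_le_atBot (-2:ℝ)] with s hs
        show -s ^ 2 / 2 ≤ s
        nlinarith
      exact (Real.tendsto_exp_atBot.comp h0).congr (fun x => rfl)
  simpa using h

lemma gG_tail {t : ℝ} (ht : t < 0) : gG t ≤ gE t / (-t) := by
  have key : gG t ≤ ∫ s in Iic t, (s / t) * gE s := by
    apply setIntegral_mono_on integrable_gE.integrableOn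
    · exact ((integrable_mul_gE.div_const t).congr
        (by filter_upwards with s using by ring)).integrableOn
    · exact measurableSet_Iic
    · intro s hs
      have h1 : 1 ≤ s / t := by
        rw [le_div_iff_of_neg ht]; simpa using hs.out
      nlinarith [gE_pos s]
  have h2 : ∫ s in Iic t, (s / t) * gE s = (∫ s in Iic t, s * gE s) / t := by
    rw [← integral_div]; congr 1; ext s; ring
  rw [h2, integral_mul_gE_Iic] at key
  calc gG t ≤ -gE t / t := key
    _ = gE t / (-t) := by rw [div_neg, neg_div]

lemma gG_tendsto_atBot : Tendsto gG atBot (𝓝 0) := by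
  have h1 : ∀ᶠ t in atBot, 0 ≤ gG t := by
    filter_upwards with t using (gG_pos t).le
  have h2 : ∀ᶠ t : ℝ in atBot, gG t ≤ (-t)⁻¹ := by
    filter_upwards [eventually_lt_atBot (0:ℝ)] with t ht
    calc gG t ≤ gE t / (-t) := gG_tail ht
      _ ≤ 1 / (-t) := by
          have hpos : (0:ℝ) < -t := by linarith
          rw [div_le_div_iff₀ hpos hpos]
          nlinarith [gE_le_one t, gE_pos t]
      _ = (-t)⁻¹ := one_div _
  have h3 : Tendsto (fun t : ℝ => (-t)⁻¹) atBot (𝓝 0) :=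
    tendsto_inv_atTop_zero.comp tendsto_neg_atBot_atTop
  exact tendsto_of_tendsto_of_tendsto_of_le_of_le' tendsto_const_nhds h3 h1 h2

lemma gE_tendsto_atBot : Tendsto gE atBot (𝓝 0) := by
  have h0 : Tendsto (fun s : ℝ => -s ^ 2 / 2) atBot atBot := by
    apply tendsto_atBot_mono' atBot ?_ tendsto_id
    filter_upwards [eventually_le_atBot (-2:ℝ)] with s hs
    show -s ^ 2 / 2 ≤ s
    nlinarith
  exact (Real.tendsto_exp_atBot.comp h0).congr (fun x => rfl)

lemma hasDerivAt_gE (t : ℝ) : HasDerivAt gE (-t * gE t) t := by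
  have h1 : HasDerivAt (fun s : ℝ => -s ^ 2 / 2) (-t) t := by
    have := ((hasDerivAt_pow 2 t).neg.div_const 2)
    refine this.congr_deriv ?_; push_cast; ring
  have h2 := (Real.hasDerivAt_exp (-t ^ 2 / 2)).comp t h1
  refine h2.congr_deriv ?_
  simp only [gE]; ring

noncomputable def gS (t : ℝ) : ℝ := Real.sqrt (t ^ 2 + 8)

lemma gS_pos (t : ℝ) : 0 < gS t := Real.sqrt_pos.2 (by positivity)
lemma gS_sq (t : ℝ) : gS t ^ 2 = t ^ 2 + 8 := Real.sq_sqrt (by positivity)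

lemma hasDerivAt_gS (t : ℝ) : HasDerivAt gS (t / gS t) t := by
  have h1 : HasDerivAt (fun s : ℝ => s ^ 2 + 8) (2 * t) t := by
    simpa using ((hasDerivAt_pow 2 t).add_const 8)
  have h2 := (Real.hasDerivAt_sqrt (show t ^ 2 + 8 ≠ 0 from (by nlinarith [sq_nonneg t] : (0:ℝ) < t^2+8).ne')).comp t h1
  refine h2.congr_deriv ?_
  rw [gS]; field_simp

lemma gS_gt (t : ℝ) (ht : t < 1) : 3 * t < gS t := by
  rcases le_or_gt t 0 with h | h
  · have := gS_pos t; linarith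
  · nlinarith [gS_sq t, gS_pos t]

lemma keyPoly (t : ℝ) : 0 ≤ gS t * (t ^ 2 + 2) + t * (t ^ 2 + 6) := by
  have hA : 0 ≤ gS t * (t ^ 2 + 2) := mul_nonneg (gS_pos t).le (by positivity)
  have h32 : (gS t * (t ^ 2 + 2) + t * (t ^ 2 + 6)) *
      (gS t * (t ^ 2 + 2) - t * (t ^ 2 + 6)) = 32 := by
    have h := gS_sq t
    linear_combination (t ^ 2 + 2) ^ 2 * h
  nlinarith [h32, hA]

noncomputable def gU (t : ℝ) : ℝ := 4 * gE t / (gS t - 3 * t) - gG t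
noncomputable def gU' (t : ℝ) : ℝ :=
  (4 * (-t * gE t) * (gS t - 3 * t) - 4 * gE t * (t / gS t - 3)) / (gS t - 3 * t) ^ 2 - gE t

lemma hasDerivAt_gU (t : ℝ) (ht : t < 1) : HasDerivAt gU (gU' t) t := by
  have hne : gS t - 3 * t ≠ 0 := by have := gS_gt t ht; linarith
  have h : HasDerivAt (fun x => 4 * gE x / (gS x - 3 * x) - gG x)
      ((4 * (-t * gE t) * (gS t - 3 * t) - 4 * gE t * (t / gS t - 3)) / (gS t - 3 * t) ^ 2
        - gE t) t := by
    have := (((hasDerivAt_gE t).const_mul 4).div ((hasDerivAt_gS t).sub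
      ((hasDerivAt_id t).const_mul 3)) hne).sub (hasDerivAt_gG t)
    refine this.congr_deriv ?_; simp
  exact h

lemma gU'_nonneg (t : ℝ) (ht : t < 1) : 0 ≤ gU' t := by
  have hS := gS_pos t
  have hgt := gS_gt t ht
  have hsq := gS_sq t
  have hE := gE_pos t
  have hkey := keyPoly t
  have heq : gU' t = gE t * (2 * (gS t * (t ^ 2 + 2) + t * (t ^ 2 + 6))) /
      (gS t * (gS t - 3 * t) ^ 2) := by
    rw [gU']
    have hne : gS t - 3 * t ≠ 0 := by linarith
    have hne' : gS t - t * 3 ≠ 0 := by linarith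
    field_simp
    linear_combination (2 * t - gS t) * hsq
  rw [heq]
  apply div_nonneg
  · apply mul_nonneg hE.le; linarith
  · apply mul_nonneg hS.le (sq_nonneg _)

lemma gU_mono : MonotoneOn gU (Iio 1) := by
  have hint : interior (Iio (1:ℝ)) = Iio 1 := interior_Iio
  apply monotoneOn_of_deriv_nonneg (convex_Iio 1)
  · intro x hx
    exact ((hasDerivAt_gU x hx).continuousAt).continuousWithinAt
  · rw [hint]
    intro x hx
    exact (hasDerivAt_gU x hx).differentiableAt.differentiableWithinAt
  · rw [hint]
    intro x hx
    rw [(hasDerivAt_gU x hx).deriv]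
    exact gU'_nonneg x hx

lemma gU_tendsto_atBot : Tendsto gU atBot (𝓝 0) := by
  have h1 : Tendsto (fun t => 4 * gE t / (gS t - 3 * t)) atBot (𝓝 0) := by
    apply tendsto_of_tendsto_of_tendsto_of_le_of_le' (tendsto_const_nhds)
      (show Tendsto (fun t => 2 * gE t) atBot (𝓝 0) by
        simpa using gE_tendsto_atBot.const_mul 2)
    · filter_upwards [eventually_le_atBot (-1:ℝ)] with t ht
      have h := gS_gt t (by linarith)
      have hE := gE_pos t
      apply div_nonneg (by linarith) (by linarith)
    · filter_upwards [eventually_le_atBot (-1:ℝ)] with t ht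
      have hS := gS_pos t
      have hden : (2:ℝ) ≤ gS t - 3 * t := by nlinarith
      rw [div_le_iff₀ (by linarith)]
      nlinarith [gE_pos t]
      
  have := h1.sub gG_tendsto_atBot
  rw [sub_zero] at this; exact this

lemma gU_nonneg (t : ℝ) (ht : t < 1) : 0 ≤ gU t := by
  have hev : ∀ᶠ s in atBot, gU s ≤ gU t := by
    filter_upwards [eventually_le_atBot (min t 0 - 1)] with s hs
    have hs1 : s ∈ Iio (1:ℝ) := by
      simp only [mem_Iio]
      have := min_le_right t 0; linarith [min_le_left t 0]
    exact gU_mono hs1 (mem_Iio.2 ht) (by linarith [min_le_left t 0])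
  exact le_of_tendsto gU_tendsto_atBot hev

lemma sampford (t : ℝ) (ht : t < 1) : (gS t - 3 * t) * gG t ≤ 4 * gE t := by
  have h := gU_nonneg t ht
  have hne : 0 < gS t - 3 * t := by have := gS_gt t ht; linarith
  rw [gU, sub_nonneg, le_div_iff₀ hne] at h
  linarith

lemma tG_add_E_nonneg (t : ℝ) : 0 ≤ t * gG t + gE t := by
  rcases le_or_gt 0 t with h | h
  · have := gG_pos t; have := gE_pos t; nlinarith
  · have := gG_tail h
    have h2 : gG t * (-t) ≤ gE t := by
      rw [← le_div_iff₀ (by linarith)]; exact this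
    nlinarith

lemma master (t : ℝ) : gG t ^ 2 ≤ (t * gG t + gE t) * (t * gG t + 2 * gE t) := by
  rcases le_or_gt 1 t with h | h
  · have hG := gG_pos t
    have hE := gE_pos t
    have h1 : gG t ^ 2 ≤ t ^ 2 * gG t ^ 2 := by nlinarith [mul_nonneg (by nlinarith : (0:ℝ) ≤ t ^ 2 - 1) (sq_nonneg (gG t))]
    nlinarith [h1, mul_pos hG hE, mul_pos hE hE,
      mul_nonneg (mul_nonneg (by linarith : (0:ℝ) ≤ t) hG.le) hE.le]
  · have hs := sampford t h
    have hS := gS_pos t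
    have hsq := gS_sq t
    have hG := gG_pos t
    have hE := gE_pos t
    have h2 : 0 ≤ 4 * gE t + (gS t + 3 * t) * gG t := by
      rcases le_or_gt 0 (gS t + 3 * t) with h3 | h3
      · nlinarith
      · nlinarith
    have hfact : 8 * ((t * gG t + gE t) * (t * gG t + 2 * gE t) - gG t ^ 2)
        = (4 * gE t - (gS t - 3 * t) * gG t) * (4 * gE t + (gS t + 3 * t) * gG t) := by
      linear_combination (gG t ^ 2) * hsq
    nlinarith [mul_nonneg (by linarith : (0:ℝ) ≤ 4 * gE t - (gS t - 3 * t) * gG t) h2]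

noncomputable def gR (t : ℝ) : ℝ := gE t / gG t
noncomputable def gR1 (t : ℝ) : ℝ := -(gR t) * (t + gR t)
noncomputable def gR2 (t : ℝ) : ℝ := -(gR1 t) * (t + gR t) - gR t * (1 + gR1 t)

lemma gR_pos (t : ℝ) : 0 < gR t := div_pos (gE_pos t) (gG_pos t)

lemma hasDerivAt_gR (t : ℝ) : HasDerivAt gR (gR1 t) t := by
  have h := (hasDerivAt_gE t).div (hasDerivAt_gG t) (gG_pos t).ne'
  refine h.congr_deriv ?_
  rw [gR1, gR]
  field_simp [(gG_pos t).ne']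
  ring

lemma hasDerivAt_gR1 (t : ℝ) : HasDerivAt gR1 (gR2 t) t := by
  have h := ((hasDerivAt_gR t).neg.mul ((hasDerivAt_id t).add (hasDerivAt_gR t)))
  refine h.congr_deriv ?_
  rw [gR2]; simp; ring

lemma gR1_nonpos (t : ℝ) : gR1 t ≤ 0 := by
  have h1 : 0 ≤ t + gR t := by
    have h := tG_add_E_nonneg t
    have hG := gG_pos t
    rw [gR]
    rw [← sub_nonneg]
    have : t + gE t / gG t - 0 = (t * gG t + gE t) / gG t := by field_simp; ring
    rw [this]
    exact div_nonneg h hG.le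
  rw [gR1]
  have := (gR_pos t).le
  nlinarith

lemma gR2_nonneg (t : ℝ) : 0 ≤ gR2 t := by
  have hG := gG_pos t
  have hE := gE_pos t
  have hm := master t
  have heq : gR2 t * gG t ^ 3 =
      gE t * ((t * gG t + gE t) * (t * gG t + 2 * gE t) - gG t ^ 2) := by
    rw [gR2, gR1, gR]
    field_simp
    ring
  nlinarith [pow_pos hG 3, mul_nonneg hE.le (sub_nonneg.2 hm)]

lemma gR_antitone : Antitone gR := by
  apply antitone_of_deriv_nonpos
  · exact fun t => (hasDerivAt_gR t).differentiableAt
  · intro t; rw [(hasDerivAt_gR t).deriv]; exact gR1_nonpos t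

section psi
variable (m h : ℝ)

noncomputable def psi (x : ℝ) : ℝ := Real.sqrt (2 * Real.pi) * gR (m * x + h)

lemma hasDerivAt_affine (x : ℝ) : HasDerivAt (fun x => m * x + h) m x := by
  simpa using ((hasDerivAt_id x).const_mul m).add_const h

lemma hasDerivAt_psi (x : ℝ) :
    HasDerivAt (psi m h) (Real.sqrt (2 * Real.pi) * gR1 (m * x + h) * m) x := by
  have := ((hasDerivAt_gR (m * x + h)).comp x (hasDerivAt_affine m h x)).const_mul
    (Real.sqrt (2 * Real.pi))
  rw [show psi m h = fun x => Real.sqrt (2 * Real.pi) * gR (m * x + h) from rfl]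
  simpa only [psi, mul_assoc, Function.comp] using this

lemma psi_convex : ConvexOn ℝ univ (psi m h) := by
  apply convexOn_of_hasDerivWithinAt2_nonneg (convex_univ)
    (f' := fun x => Real.sqrt (2 * Real.pi) * gR1 (m * x + h) * m)
    (f'' := fun x => Real.sqrt (2 * Real.pi) * gR2 (m * x + h) * m * m)
  · exact fun x _ => (hasDerivAt_psi m h x).continuousAt.continuousWithinAt
  · intro x _
    exact (hasDerivAt_psi m h x).hasDerivWithinAt
  · intro x _
    apply HasDerivAt.hasDerivWithinAt
    have := (((hasDerivAt_gR1 (m * x + h)).comp x (hasDerivAt_affine m h x)).const_mul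
      (Real.sqrt (2 * Real.pi))).mul_const m
    refine this.congr_deriv ?_
    ring
  · intro x _
    have h1 : (0:ℝ) ≤ Real.sqrt (2 * Real.pi) := Real.sqrt_nonneg _
    have h2 := gR2_nonneg (m * x + h)
    have := mul_nonneg (mul_nonneg (mul_nonneg h1 h2) (abs_nonneg m)) (abs_nonneg m)
    nlinarith [sq_nonneg m, mul_nonneg h1 h2, sq_nonneg (m * Real.sqrt (2*Real.pi)), mul_nonneg (mul_nonneg h1 h2) (sq_nonneg m)]
end psi

noncomputable def dens (x : ℝ) : ℝ := (Real.sqrt (2 * Real.pi))⁻¹ * gE x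

lemma sqrt_two_pi_pos : 0 < Real.sqrt (2 * Real.pi) :=
  Real.sqrt_pos.2 (by positivity)

lemma one_le_sqrt_two_pi : 1 ≤ Real.sqrt (2 * Real.pi) := by
  rw [show (1:ℝ) = Real.sqrt 1 by simp]
  apply Real.sqrt_le_sqrt
  nlinarith [Real.pi_gt_three]

lemma dens_pos (x : ℝ) : 0 < dens x := by
  have := gE_pos x; have := sqrt_two_pi_pos; rw [dens]; positivity

lemma dens_le_gE (x : ℝ) : dens x ≤ gE x := by
  rw [dens]
  have h1 := one_le_sqrt_two_pi
  have h2 := gE_pos x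
  have : (Real.sqrt (2 * Real.pi))⁻¹ ≤ 1 := by
    rw [inv_le_one_iff₀]; right; exact h1
  nlinarith

lemma continuous_dens : Continuous dens := continuous_const.mul continuous_gE

lemma stdGaussian1_eq : stdGaussian1 = volume.withDensity (fun x => ENNReal.ofReal (dens x)) :=
  rfl

lemma stdGaussian1_restrict {s : Set ℝ} (hs : MeasurableSet s) :
    stdGaussian1.restrict s = (volume.restrict s).withDensity (fun x => ENNReal.ofReal (dens x)) := by
  rw [stdGaussian1_eq, restrict_withDensity hs]

lemma setIntegral_stdG {s : Set ℝ} (hs : MeasurableSet s) (f : ℝ → ℝ) :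
    ∫ x in s, f x ∂stdGaussian1 = ∫ x in s, dens x * f x := by
  rw [show (∫ x in s, f x ∂stdGaussian1) = ∫ x, f x ∂(stdGaussian1.restrict s) from rfl,
    stdGaussian1_restrict hs]
  have h0 : (fun x => ENNReal.ofReal (dens x)) = (fun x => ((dens x).toNNReal : ℝ≥0∞)) := rfl
  rw [h0, integral_withDensity_eq_integral_smul]
  · apply integral_congr_ae
    filter_upwards with x
    rw [NNReal.smul_def, Real.coe_toNNReal _ (dens_pos x).le, smul_eq_mul]
  · exact (continuous_dens.measurable).real_toNNReal

lemma integrableOn_stdG_iff {s : Set ℝ} (hs : MeasurableSet s) (f : ℝ → ℝ) :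
    IntegrableOn f s stdGaussian1 ↔ IntegrableOn (fun x => f x * dens x) s volume := by
  rw [IntegrableOn, stdGaussian1_restrict hs,
    integrable_withDensity_iff (continuous_dens.measurable.ennreal_ofReal)
      (by filter_upwards with x using ENNReal.ofReal_lt_top)]
  apply integrable_congr
  filter_upwards with x
  rw [ENNReal.toReal_ofReal (dens_pos x).le]

lemma integrableOn_stdG_of_bound {s : Set ℝ} (hs : MeasurableSet s) (f : ℝ → ℝ)
    (hfc : Continuous f) (c₁ c₂ : ℝ) (h1 : 0 ≤ c₁) (h2 : 0 ≤ c₂)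
    (hb : ∀ x, |f x| ≤ c₁ + c₂ * |x|) : IntegrableOn f s stdGaussian1 := by
  rw [integrableOn_stdG_iff hs]
  apply Integrable.integrableOn
  have base := (integrable_exp_neg_mul_sq (show (0:ℝ) < 1/4 by norm_num)).const_mul (c₁ + 2 * c₂)
  apply base.mono' ((hfc.mul continuous_dens).aestronglyMeasurable)
  filter_upwards with x
  have hd := dens_pos x
  have hdg := dens_le_gE x
  have hq := gE_le_quarter x
  have hab := abs_mul_gE_le x
  have hE := gE_pos x
  rw [Pi.mul_apply, norm_mul, Real.norm_eq_abs, Real.norm_eq_abs, abs_of_pos hd]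
  have hfx := hb x
  have step1 : |f x| * dens x ≤ (c₁ + c₂ * |x|) * gE x := by
    apply mul_le_mul hfx hdg hd.le
    have := abs_nonneg x; nlinarith
  have step2 : (c₁ + c₂ * |x|) * gE x ≤ (c₁ + 2 * c₂) * Real.exp (-(1/4) * x ^ 2) := by
    have e1 : c₁ * gE x ≤ c₁ * Real.exp (-(1/4) * x ^ 2) := by nlinarith
    have e2 : c₂ * (|x| * gE x) ≤ c₂ * (2 * Real.exp (-(1/4) * x ^ 2)) := by nlinarith
    nlinarith
  calc |f x| * dens x ≤ (c₁ + c₂ * |x|) * gE x := step1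
    _ ≤ (c₁ + 2*c₂) * Real.exp (-(1/4) * x ^ 2) := step2

lemma stdG_measure_pos {s : Set ℝ} (hs : MeasurableSet s) (hpos : 0 < volume s) :
    0 < stdGaussian1 s := by
  rw [stdGaussian1_eq, withDensity_apply _ hs]
  rw [lintegral_pos_iff_support (continuous_dens.measurable.ennreal_ofReal)]
  have hsupp : Function.support (fun x => ENNReal.ofReal (dens x)) = univ := by
    ext x
    simp [Function.mem_support, ENNReal.ofReal_eq_zero, not_le, dens_pos x]
  rw [hsupp, Measure.restrict_apply MeasurableSet.univ, univ_inter]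
  exact hpos

lemma stdNormalCDF_eq (t : ℝ) : stdNormalCDF t = (Real.sqrt (2 * Real.pi))⁻¹ * gG t := rfl

lemma stdNormalCDF_pos (t : ℝ) : 0 < stdNormalCDF t := by
  rw [stdNormalCDF_eq]
  have := gG_pos t; have := sqrt_two_pi_pos
  positivity

lemma gG_le_sqrt (t : ℝ) : gG t ≤ Real.sqrt (2 * Real.pi) := by
  have h1 : gG t ≤ ∫ s, gE s := by
    apply setIntegral_le_integral integrable_gE
    filter_upwards with x using (gE_pos x).le
  have h2 : ∫ s, gE s = Real.sqrt (2 * Real.pi) := by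
    have := integral_gaussian (1/2)
    have heq : ∀ s : ℝ, gE s = Real.exp (-((1:ℝ)/2) * s ^ 2) := by
      intro s; rw [gE]; ring_nf
    rw [show (∫ s, gE s) = ∫ s, Real.exp (-((1:ℝ)/2) * s^2) from by simp_rw [heq]]
    rw [this]
    congr 1
    ring
  linarith

lemma stdNormalCDF_le_one (t : ℝ) : stdNormalCDF t ≤ 1 := by
  rw [stdNormalCDF_eq]
  have h := gG_le_sqrt t
  have hp := sqrt_two_pi_pos
  rw [inv_mul_le_iff₀ hp, mul_one]
  exact h

lemma gG_monotone : Monotone gG := by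
  apply monotone_of_deriv_nonneg
  · exact fun t => (hasDerivAt_gG t).differentiableAt
  · intro t; rw [(hasDerivAt_gG t).deriv]; exact (gE_pos t).le

lemma stdNormalCDF_monotone : Monotone stdNormalCDF := by
  intro x y hxy
  rw [stdNormalCDF_eq, stdNormalCDF_eq]
  have := sqrt_two_pi_pos
  have := gG_monotone hxy
  apply mul_le_mul_of_nonneg_left this (by positivity)

lemma continuous_stdNormalCDF : Continuous stdNormalCDF :=
  continuous_const.mul continuous_gG

lemma secant_upper {F : ℝ → ℝ} (hF : ConvexOn ℝ univ F) {a b x : ℝ} (hab : a < b)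
    (hx : x ∈ Icc a b) : F x ≤ F a + (F b - F a) / (b - a) * (x - a) := by
  obtain ⟨hax, hxb⟩ := hx
  have hba : 0 < b - a := by linarith
  set l1 : ℝ := (b - x) / (b - a) with hl1
  set l2 : ℝ := (x - a) / (b - a) with hl2
  have h1 : 0 ≤ l1 := div_nonneg (by linarith) hba.le
  have h2 : 0 ≤ l2 := div_nonneg (by linarith) hba.le
  have h3 : l1 + l2 = 1 := by rw [hl1, hl2]; field_simp; ring
  have h4 : l1 • a + l2 • b = x := by
    simp only [smul_eq_mul, hl1, hl2]; field_simp; ring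
  have hcv := hF.2 (mem_univ a) (mem_univ b) h1 h2 h3
  rw [h4] at hcv
  calc F x ≤ l1 • F a + l2 • F b := hcv
    _ = F a + (F b - F a) / (b - a) * (x - a) := by
        simp only [smul_eq_mul, hl1, hl2]; field_simp; ring

lemma secant_lower_left {F : ℝ → ℝ} (hF : ConvexOn ℝ univ F) {a b x : ℝ} (hab : a < b)
    (hx : x ≤ a) : F a + (F b - F a) / (b - a) * (x - a) ≤ F x := by
  rcases eq_or_lt_of_le hx with rfl | hlt
  · simp
  · have hs := hF.slope_mono_adjacent (mem_univ x) (mem_univ b) hlt hab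
    have hax : 0 < a - x := by linarith
    have h1 : F a - F x ≤ (F b - F a) / (b - a) * (a - x) := (div_le_iff₀ hax).1 hs
    have h2 : (F b - F a) / (b - a) * (x - a) = -((F b - F a) / (b - a) * (a - x)) := by ring
    linarith

lemma secant_lower_right {F : ℝ → ℝ} (hF : ConvexOn ℝ univ F) {a b x : ℝ} (hab : a < b)
    (hx : b ≤ x) : F a + (F b - F a) / (b - a) * (x - a) ≤ F x := by
  have hba : 0 < b - a := by linarith
  have hqb : (F b - F a) / (b - a) * (b - a) = F b - F a := by field_simp
  rcases eq_or_lt_of_le hx with rfl | hlt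
  · nlinarith [hqb]
  · have hs := hF.slope_mono_adjacent (mem_univ a) (mem_univ x) hab hlt
    have hbx : 0 < x - b := by linarith
    have h1 : (F b - F a) / (b - a) * (x - b) ≤ F x - F b := by
      rw [← le_div_iff₀ hbx]; exact hs
    have h2 : (F b - F a) / (b - a) * (x - a) =
        (F b - F a) / (b - a) * (b - a) + (F b - F a) / (b - a) * (x - b) := by ring
    linarith [hqb]

/-- The key inequality in the proof of Lemma 9: if `c` is the Gaussian centroid of `[a,b]`,
`a < b ≤ B`, `m ≥ 0`, and the `μ₂`-centroid condition
`∫_{−∞}^B (x − c) Φ(m x + h) dμ₁(x) = 0` holds, then, writing `y = m x + h`,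
`(∫_{−∞}^B e^{−y²/2} dμ₁) / (∫_{−∞}^B Φ(y) dμ₁) ≥ (∫_a^b e^{−y²/2} dμ₁) / (∫_a^b Φ(y) dμ₁)`. -/
theorem average_ratio_ge_of_centroid
    (m h a b B c : ℝ) (hm : 0 ≤ m) (hab : a < b) (hbB : b ≤ B)
    (hc : ∫ x in Set.Icc a b, (x - c) ∂stdGaussian1 = 0)
    (hB : ∫ x in Set.Iic B, (x - c) * stdNormalCDF (m * x + h) ∂stdGaussian1 = 0) :
    (∫ x in Set.Iic B, Real.exp (-(m * x + h) ^ 2 / 2) ∂stdGaussian1) /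
        (∫ x in Set.Iic B, stdNormalCDF (m * x + h) ∂stdGaussian1) ≥
      (∫ x in Set.Icc a b, Real.exp (-(m * x + h) ^ 2 / 2) ∂stdGaussian1) /
        (∫ x in Set.Icc a b, stdNormalCDF (m * x + h) ∂stdGaussian1) := by
  set μ := stdGaussian1 with hμ
  set g : ℝ → ℝ := fun x => stdNormalCDF (m * x + h) with hg
  set f : ℝ → ℝ := fun x => Real.exp (-(m * x + h) ^ 2 / 2) with hf
  have hfgE : ∀ x, f x = gE (m * x + h) := fun x => rfl
  set F : ℝ → ℝ := psi m h with hF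
  set q : ℝ := (F b - F a) / (b - a) with hq
  set p : ℝ := F a + q * (c - a) with hp
  set l : ℝ → ℝ := fun x => F a + q * (x - a) with hl
  -- basic facts
  have hsub : Icc a b ⊆ Iic B := fun x hx => le_trans hx.2 hbB
  have hgpos : ∀ x, 0 < g x := fun x => stdNormalCDF_pos _
  have hgle1 : ∀ x, g x ≤ 1 := fun x => stdNormalCDF_le_one _
  have hgmono : Monotone g := by
    intro x y hxy
    exact stdNormalCDF_monotone (by nlinarith : m * x + h ≤ m * y + h)
  have hgcont : Continuous g :=
    continuous_stdNormalCDF.comp ((continuous_const.mul continuous_id).add continuous_const)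
  have hfcont : Continuous f := by
    rw [hf]
    have : Continuous (fun x : ℝ => gE (m * x + h)) :=
      continuous_gE.comp ((continuous_const.mul continuous_id).add continuous_const)
    exact this
  have hlcont : Continuous l := by
    apply continuous_const.add (continuous_const.mul (continuous_id.sub continuous_const))
  -- q ≤ 0
  have hqle : q ≤ 0 := by
    rw [hq]
    apply div_nonpos_of_nonpos_of_nonneg _ (by linarith)
    have : F b ≤ F a := by
      rw [hF]
      apply mul_le_mul_of_nonneg_left _ sqrt_two_pi_pos.le
      exact gR_antitone (by nlinarith : m * a + h ≤ m * b + h)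
    linarith
  -- f = psi * g
  have hfpsig : ∀ x, f x = F x * g x := by
    intro x
    rw [hfgE, hF, psi, hg]
    simp only
    rw [stdNormalCDF_eq, gR]
    field_simp [(gG_pos (m * x + h)).ne', sqrt_two_pi_pos.ne']
  -- pointwise bounds
  have hfle1 : ∀ x, 0 < f x ∧ f x ≤ 1 := by
    intro x; rw [hfgE]
    refine ⟨gE_pos _, ?_⟩
    rw [gE, Real.exp_le_one_iff]
    nlinarith [sq_nonneg (m * x + h)]
  have hlbound : ∀ x, |l x| ≤ (|F a| + |q| * |a|) + |q| * |x| := by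
    intro x
    rw [hl]
    simp only
    calc |F a + q * (x - a)| ≤ |F a| + |q * (x - a)| := abs_add_le _ _
      _ = |F a| + |q| * |x - a| := by rw [abs_mul]
      _ ≤ |F a| + |q| * (|x| + |a|) := by
          have := abs_sub (x) (a)
          have h2 : |x - a| ≤ |x| + |a| := abs_sub _ _
          nlinarith [abs_nonneg q]
      _ = (|F a| + |q| * |a|) + |q| * |x| := by ring
  -- integrability
  have iT_g : IntegrableOn g (Icc a b) μ :=
    integrableOn_stdG_of_bound measurableSet_Icc g hgcont 1 0 zero_le_one le_rfl
      (fun x => by rw [abs_of_pos (hgpos x)]; simpa using hgle1 x)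
  have iS_g : IntegrableOn g (Iic B) μ :=
    integrableOn_stdG_of_bound measurableSet_Iic g hgcont 1 0 zero_le_one le_rfl
      (fun x => by rw [abs_of_pos (hgpos x)]; simpa using hgle1 x)
  have iT_f : IntegrableOn f (Icc a b) μ :=
    integrableOn_stdG_of_bound measurableSet_Icc f hfcont 1 0 zero_le_one le_rfl
      (fun x => by rw [abs_of_pos (hfle1 x).1]; simpa using (hfle1 x).2)
  have iS_f : IntegrableOn f (Iic B) μ :=
    integrableOn_stdG_of_bound measurableSet_Iic f hfcont 1 0 zero_le_one le_rfl
      (fun x => by rw [abs_of_pos (hfle1 x).1]; simpa using (hfle1 x).2)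
  have ilg : ∀ {s : Set ℝ}, MeasurableSet s → IntegrableOn (fun x => l x * g x) s μ := by
    intro s hs
    apply integrableOn_stdG_of_bound hs _ (hlcont.mul hgcont)
      (|F a| + |q| * |a|) (|q|) (by positivity) (abs_nonneg q)
    intro x
    simp only [Pi.mul_apply, Pi.sub_apply, id_eq, abs_mul]
    calc |l x| * |g x| ≤ |l x| * 1 := by
          apply mul_le_mul_of_nonneg_left _ (abs_nonneg _)
          rw [abs_of_pos (hgpos x)]; exact hgle1 x
      _ = |l x| := mul_one _
      _ ≤ _ := hlbound x
  have ixcg : ∀ {s : Set ℝ}, MeasurableSet s → IntegrableOn (fun x => (x - c) * g x) s μ := by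
    intro s hs
    apply integrableOn_stdG_of_bound hs _ ((continuous_id.sub continuous_const).mul hgcont)
      (|c|) 1 (abs_nonneg c) zero_le_one
    intro x
    simp only [Pi.mul_apply, Pi.sub_apply, id_eq, abs_mul]
    calc |x - c| * |g x| ≤ |x - c| * 1 := by
          apply mul_le_mul_of_nonneg_left _ (abs_nonneg _)
          rw [abs_of_pos (hgpos x)]; exact hgle1 x
      _ = |x - c| := mul_one _
      _ ≤ |x| + |c| := abs_sub _ _
      _ = |c| + 1 * |x| := by ring
  have ixc : ∀ {s : Set ℝ}, MeasurableSet s → IntegrableOn (fun x => (x - c)) s μ := by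
    intro s hs
    apply integrableOn_stdG_of_bound hs _ (continuous_id.sub continuous_const)
      (|c|) 1 (abs_nonneg c) zero_le_one
    intro x
    calc |x - c| ≤ |x| + |c| := abs_sub _ _
      _ = |c| + 1 * |x| := by ring
  have ixcg2 : IntegrableOn (fun x => (x - c) * (g x - g c)) (Icc a b) μ := by
    apply integrableOn_stdG_of_bound measurableSet_Icc _
      ((continuous_id.sub continuous_const).mul (hgcont.sub continuous_const))
      (|c|) 1 (abs_nonneg c) zero_le_one
    intro x
    simp only [Pi.mul_apply, Pi.sub_apply, id_eq, abs_mul]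
    have hgd : |g x - g c| ≤ 1 := by
      rw [abs_le]
      constructor
      · have := hgpos x; have := hgle1 c; nlinarith
      · have := hgpos c; have := hgle1 x; nlinarith
    calc |x - c| * |g x - g c| ≤ |x - c| * 1 :=
          mul_le_mul_of_nonneg_left hgd (abs_nonneg _)
      _ = |x - c| := mul_one _
      _ ≤ |x| + |c| := abs_sub _ _
      _ = |c| + 1 * |x| := by ring
  -- main quantities
  set DS : ℝ := ∫ x in Iic B, g x ∂μ with hDS
  set DT : ℝ := ∫ x in Icc a b, g x ∂μ with hDT
  set NS : ℝ := ∫ x in Iic B, f x ∂μ with hNS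
  set NT : ℝ := ∫ x in Icc a b, f x ∂μ with hNT
  set CT : ℝ := ∫ x in Icc a b, (x - c) * g x ∂μ with hCT
  -- positivity
  have hDTpos : 0 < DT := by
    rw [hDT, setIntegral_pos_iff_support_of_nonneg_ae
      (by filter_upwards with x using (hgpos x).le) iT_g]
    have hsupp : Function.support g = univ := by
      ext x; simp [Function.mem_support, (hgpos x).ne']
    rw [hsupp, univ_inter]
    apply stdG_measure_pos measurableSet_Icc
    rw [Real.volume_Icc]
    exact ENNReal.ofReal_pos.2 (by linarith)
  have hDSpos : 0 < DS := by
    rw [hDS, setIntegral_pos_iff_support_of_nonneg_ae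
      (by filter_upwards with x using (hgpos x).le) iS_g]
    have hsupp : Function.support g = univ := by
      ext x; simp [Function.mem_support, (hgpos x).ne']
    rw [hsupp, univ_inter]
    apply stdG_measure_pos measurableSet_Iic
    rw [Real.volume_Iic]
    norm_num
  have hDTS : DT ≤ DS := by
    rw [hDT, hDS]
    apply setIntegral_mono_set iS_g
      (by filter_upwards with x using (hgpos x).le)
      (HasSubset.Subset.eventuallyLE hsub)
  -- CT ≥ 0
  have hCTnonneg : 0 ≤ CT := by
    have e1 : ∀ x, (x - c) * g x = (x - c) * (g x - g c) + g c * (x - c) := fun x => by ring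
    have e2 : CT = (∫ x in Icc a b, (x - c) * (g x - g c) ∂μ)
        + ∫ x in Icc a b, g c * (x - c) ∂μ := by
      rw [hCT, ← integral_add ixcg2 ((ixc measurableSet_Icc).const_mul (g c))]
      apply integral_congr_ae
      filter_upwards with x using e1 x
    have e3 : (∫ x in Icc a b, g c * (x - c) ∂μ) = 0 := by
      rw [integral_const_mul, hc, mul_zero]
    have e4 : 0 ≤ ∫ x in Icc a b, (x - c) * (g x - g c) ∂μ := by
      apply setIntegral_nonneg measurableSet_Icc
      intro x _
      rcases le_or_gt c x with hcx | hcx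
      · apply mul_nonneg (by linarith) (sub_nonneg.2 (hgmono hcx))
      · have h1 : x - c ≤ 0 := by linarith
        have h2 : g x - g c ≤ 0 := sub_nonpos.2 (hgmono hcx.le)
        nlinarith
    linarith [e2, e3, e4]
  -- l * g decompositions
  have hlpq : ∀ x, l x * g x = p * g x + q * ((x - c) * g x) := by
    intro x; rw [hl, hp]; simp only; ring
  have hlS : (∫ x in Iic B, l x * g x ∂μ) = p * DS := by
    have : (∫ x in Iic B, l x * g x ∂μ)
        = (∫ x in Iic B, p * g x ∂μ) + ∫ x in Iic B, q * ((x - c) * g x) ∂μ := by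
      rw [← integral_add (iS_g.const_mul p) ((ixcg measurableSet_Iic).const_mul q)]
      apply integral_congr_ae
      filter_upwards with x using hlpq x
    rw [this, integral_const_mul, integral_const_mul]
    have hBz : (∫ x in Iic B, (x - c) * g x ∂μ) = 0 := hB
    rw [hBz, hDS, mul_zero, add_zero]
  have hlT : (∫ x in Icc a b, l x * g x ∂μ) = p * DT + q * CT := by
    have : (∫ x in Icc a b, l x * g x ∂μ)
        = (∫ x in Icc a b, p * g x ∂μ) + ∫ x in Icc a b, q * ((x - c) * g x) ∂μ := by
      rw [← integral_add (iT_g.const_mul p) ((ixcg measurableSet_Icc).const_mul q)]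
      apply integral_congr_ae
      filter_upwards with x using hlpq x
    rw [this, integral_const_mul, integral_const_mul, hDT, hCT]
  -- pointwise secant bounds
  have hptT : ∀ x ∈ Icc a b, f x - l x * g x ≤ 0 := by
    intro x hx
    have h1 : F x ≤ l x := secant_upper (psi_convex m h) hab hx
    have h2 : F x * g x ≤ l x * g x :=
      mul_le_mul_of_nonneg_right h1 (hgpos x).le
    rw [hfpsig x] at *
    linarith
  have hptST : ∀ x ∈ Iic B \ Icc a b, 0 ≤ f x - l x * g x := by
    intro x hx
    obtain ⟨hx1, hx2⟩ := hx
    have hor : x ≤ a ∨ b ≤ x := by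
      by_contra hcon
      push_neg at hcon
      exact hx2 ⟨hcon.1.le, hcon.2.le⟩
    have h1 : l x ≤ F x := by
      rcases hor with hor1 | hor1
      · exact secant_lower_left (psi_convex m h) hab hor1
      · exact secant_lower_right (psi_convex m h) hab hor1
    have h2 : l x * g x ≤ F x * g x :=
      mul_le_mul_of_nonneg_right h1 (hgpos x).le
    rw [hfpsig x]
    linarith
  -- integrals of f - l*g
  have iT_flg : IntegrableOn (fun x => f x - l x * g x) (Icc a b) μ :=
    iT_f.sub (ilg measurableSet_Icc)
  have iST_flg : IntegrableOn (fun x => f x - l x * g x) (Iic B \ Icc a b) μ :=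
    IntegrableOn.mono_set (iS_f.sub (ilg measurableSet_Iic)) diff_subset
  have hWT : (∫ x in Icc a b, (f x - l x * g x) ∂μ) ≤ 0 := by
    apply setIntegral_nonpos measurableSet_Icc
    exact hptT
  have hZ : 0 ≤ ∫ x in Iic B \ Icc a b, (f x - l x * g x) ∂μ := by
    apply setIntegral_nonneg (measurableSet_Iic.diff measurableSet_Icc)
    exact hptST
  have hsplit : (∫ x in Iic B, (f x - l x * g x) ∂μ)
      = (∫ x in Icc a b, (f x - l x * g x) ∂μ)
        + ∫ x in Iic B \ Icc a b, (f x - l x * g x) ∂μ := by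
    rw [← setIntegral_union disjoint_sdiff_self_right
      (measurableSet_Iic.diff measurableSet_Icc) iT_flg iST_flg,
      union_diff_cancel hsub]
  have hS_eq : (∫ x in Iic B, (f x - l x * g x) ∂μ) = NS - p * DS := by
    rw [integral_sub iS_f (ilg measurableSet_Iic), hlS, hNS]
  have hT_eq : (∫ x in Icc a b, (f x - l x * g x) ∂μ) = NT - (p * DT + q * CT) := by
    rw [integral_sub iT_f (ilg measurableSet_Icc), hlT, hNT]
  -- final algebra
  set WT : ℝ := ∫ x in Icc a b, (f x - l x * g x) ∂μ
  set Z : ℝ := ∫ x in Iic B \ Icc a b, (f x - l x * g x) ∂μ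
  have hNSval : NS = p * DS + WT + Z := by linarith [hS_eq, hsplit]
  have hNTval : NT = p * DT + q * CT + WT := by linarith [hT_eq]
  rw [ge_iff_le, div_le_div_iff₀ hDTpos hDSpos]
  nlinarith [mul_nonneg (mul_nonneg (neg_nonneg.2 hqle) hCTnonneg) hDSpos.le,
    mul_nonneg (neg_nonneg.2 hWT) (sub_nonneg.2 hDTS),
    mul_nonneg hZ hDTpos.le]
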